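/- arXiv:math/0601638 — 2 statements merged into one kernel-verified Lean document; each statement's English description precedes it below -/
import Mathlib

section
/- Let ‖·‖ be a norm on ℝ^d and let P be a d-polytope in ℝ^d that is subequilateral with respect to ‖·‖. Then P is edge-antipodal: for any two vertices x and y of P joined by an edge there exist two parallel hyperplanes, one through x and one through y, such that P is contained in the closed slab bounded by the two hyperplanes. -/
open Pointwise

/-- `N` is a norm on the real vector space `E`. -/
def IsNorm {E : Type*} [AddCommGroup E] [Module ℝ E] (N : E → ℝ) : Prop :=
  (∀ x, N x = 0 ↔ x = 0) ∧ (∀ (a : ℝ) (x : E), N (a • x) = |a| * N x) ∧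
  (∀ x y, N (x + y) ≤ N x + N y)

/-- The segment `[x, y]` is an edge (a 1-dimensional face) of `P`. -/
def IsEdge {E : Type*} [AddCommGroup E] [Module ℝ E] (P : Set E) (x y : E) : Prop :=
  x ≠ y ∧ IsExtreme ℝ P (segment ℝ x y)

/-- The diameter of a set `P` with respect to the norm `N`. -/
noncomputable def polyDiam {E : Type*} [AddCommGroup E] (N : E → ℝ) (P : Set E) : ℝ :=
  sSup {r | ∃ x ∈ P, ∃ y ∈ P, N (x - y) = r}

/-- The minimum pairwise distance of a finite set `V` with respect to the norm `N`. -/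
noncomputable def minPairDist {E : Type*} [AddCommGroup E] (N : E → ℝ) (V : Finset E) : ℝ :=
  sInf {r | ∃ x ∈ V, ∃ y ∈ V, x ≠ y ∧ N (x - y) = r}

/-- The functional `λ(V; N) = diam(V) / min pairwise distance`. -/
noncomputable def lamV {E : Type*} [AddCommGroup E] (N : E → ℝ) (V : Finset E) : ℝ :=
  polyDiam N (V : Set E) / minPairDist N V

/-- `P` is subequilateral with respect to `N`: every edge has length the diameter of `P`. -/
def Subequilateral {E : Type*} [AddCommGroup E] [Module ℝ E] (N : E → ℝ) (P : Set E) : Prop :=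
  ∀ x y, IsEdge P x y → N (x - y) = polyDiam N P

/-- There are two parallel hyperplanes, one through `x` and one through `y`, such that `P`
lies in the closed slab bounded by them. -/
def InSlab {E : Type*} [AddCommGroup E] [Module ℝ E] (P : Set E) (x y : E) : Prop :=
  ∃ f : E →ₗ[ℝ] ℝ, f ≠ 0 ∧ ∀ z ∈ P, min (f x) (f y) ≤ f z ∧ f z ≤ max (f x) (f y)

/-- `P` is edge-antipodal. -/
def EdgeAntipodal {E : Type*} [AddCommGroup E] [Module ℝ E] (P : Set E) : Prop :=
  ∀ x y, IsEdge P x y → InSlab P x y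

/-- `P` is antipodal. -/
def Antipodal {E : Type*} [AddCommGroup E] [Module ℝ E] (P : Set E) : Prop :=
  ∀ x ∈ Set.extremePoints ℝ P, ∀ y ∈ Set.extremePoints ℝ P, x ≠ y → InSlab P x y

/-- The relative norm determined by `P`, i.e. the norm with unit ball `P - P`. -/
noncomputable def relNorm {E : Type*} [AddCommGroup E] [Module ℝ E] (P : Set E) : E → ℝ :=
  gauge (P - P)

/-!
Let `[x, y]` be an edge, so `N (x - y)` is the diameter `D` of `P`. By Hahn–Banach there is a
linear functional `f ≤ N` with `f (x - y) = D`. For every `z ∈ P` both `f z - f y ≤ N (z - y)` and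
`f x - f z ≤ N (x - z)` are at most `D = f x - f y`, so `f y ≤ f z ≤ f x`: the level sets of `f`
through `y` and `x` bound a slab containing `P`.
-/

namespace IsNorm

variable {E : Type*} [AddCommGroup E] [Module ℝ E] {N : E → ℝ}

lemma map_zero (hN : IsNorm N) : N 0 = 0 := (hN.1 0).2 rfl

lemma map_neg (hN : IsNorm N) (x : E) : N (-x) = N x := by
  simpa using hN.2.1 (-1) x

lemma nonneg (hN : IsNorm N) (x : E) : 0 ≤ N x := by
  have h := hN.2.2 x (-x)
  rw [add_neg_cancel, hN.map_zero, hN.map_neg] at h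
  linarith

lemma exists_dual_vector (hN : IsNorm N) {v : E} (hv : v ≠ 0) :
    ∃ f : E →ₗ[ℝ] ℝ, f v = N v ∧ ∀ w, f w ≤ N w := by
  let p := LinearPMap.mkSpanSingleton (K := ℝ) (L := ℝ) (σ := RingHom.id ℝ) v (N v) hv
  have hp : ∀ w : p.domain, p w ≤ N w := by
    rintro ⟨w, hw⟩
    obtain ⟨c, rfl⟩ := Submodule.mem_span_singleton.1 hw
    rw [LinearPMap.mkSpanSingleton'_apply _ _ _ c hw, hN.2.1, smul_eq_mul]
    exact mul_le_mul_of_nonneg_right (le_abs_self c) (hN.nonneg v)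
  obtain ⟨f, hfp, hfN⟩ := exists_extension_of_le_sublinear p N
    (fun c hc w => by rw [hN.2.1, abs_of_pos hc]) hN.2.2 hp
  refine ⟨f, ?_, hfN⟩
  rw [← LinearPMap.mkSpanSingleton_apply ℝ ℝ hv (N v)]
  exact hfp ⟨v, Submodule.mem_span_singleton_self v⟩

end IsNorm

section Slab

variable {E : Type*} [AddCommGroup E] [Module ℝ E] {N : E → ℝ} {P : Set E} {x y : E}

theorem inSlab_of_norm_sub_eq_polyDiam (hN : IsNorm N) (hx : x ∈ P) (hy : y ∈ P) (hxy : x ≠ y)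
    (hdiam : N (x - y) = polyDiam N P) : InSlab P x y := by
  -- If the distances were unbounded, `sSup` would return the junk value `0`, forcing `x = y`.
  have hbdd : BddAbove {r | ∃ a ∈ P, ∃ b ∈ P, N (a - b) = r} := by
    by_contra h
    rw [polyDiam, Real.sSup_of_not_bddAbove h] at hdiam
    exact hxy (sub_eq_zero.1 ((hN.1 _).1 hdiam))
  obtain ⟨f, hfxy, hfN⟩ := hN.exists_dual_vector (sub_ne_zero.2 hxy)
  have hwidth : ∀ a ∈ P, ∀ b ∈ P, f a - f b ≤ f x - f y := by
    intro a ha b hb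
    rw [← map_sub, ← map_sub, hfxy, hdiam]
    exact (hfN (a - b)).trans (le_csSup hbdd ⟨a, ha, b, hb, rfl⟩)
  refine ⟨f, ?_, fun z hz => ⟨?_, ?_⟩⟩
  · rintro rfl
    exact hxy (sub_eq_zero.1 ((hN.1 _).1 hfxy.symm))
  · linarith [min_le_right (f x) (f y), hwidth x hx z hz]
  · linarith [le_max_left (f x) (f y), hwidth z hz y hy]

theorem Subequilateral.edgeAntipodal (hN : IsNorm N) (hsub : Subequilateral N P) :
    EdgeAntipodal P := fun x y hedge =>
  inSlab_of_norm_sub_eq_polyDiam hN (hedge.2.1 (left_mem_segment ℝ x y))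
    (hedge.2.1 (right_mem_segment ℝ x y)) hedge.1 (hsub x y hedge)

end Slab

theorem subequilateral_edgeAntipodal_general (d : ℕ)
    (N : (Fin d → ℝ) → ℝ) (hN : IsNorm N)
    (P : Set (Fin d → ℝ))
    (hsub : Subequilateral N P) :
    EdgeAntipodal P :=
  hsub.edgeAntipodal hN

/-- A `d`-polytope that is subequilateral with respect to a norm `N` on `ℝ^d`
is edge-antipodal. -/
theorem subequilateral_edgeAntipodal (d : ℕ)
    (N : (Fin d → ℝ) → ℝ) (hN : IsNorm N)
    (V : Finset (Fin d → ℝ)) (P : Set (Fin d → ℝ))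
    (hP : P = convexHull ℝ (V : Set (Fin d → ℝ)))
    (hdim : affineSpan ℝ P = ⊤)
    (hsub : Subequilateral N P) :
    EdgeAntipodal P :=
  subequilateral_edgeAntipodal_general d N hN P hsub
end

section
/- Let d ≥ 4, let e_1, …, e_d be the standard basis of ℝ^d, let p = (2/(d−1)) Σ_{i=1}^{d−1} e_i, and let λ be a real number with 1 < λ < (d−1)/2. Let P be the polytope with vertex set V = {0, e_1, …, e_d, p, e_d + λp}. Then the diameter of V in the relative norm ‖·‖_P is at most 1, ‖e_d − 0‖_P = 1, ‖p − 0‖_P = 1/λ, and consequently λ(V; ‖·‖_P) ≥ λ. -/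
/-!
Every difference of two vertices lies in the unit ball `P - P`, so all the upper bounds are
free. The lower bounds come from linear functionals `f` mapping the vertices into `[0, 1]`:
such an `f` satisfies `|f| ≤ 1` on `P - P`, hence `|f z| ≤ ‖z‖_P`. The last coordinate
certifies `‖e_d‖_P ≥ 1`, and `(2λ)⁻¹` times the sum of the first `d - 1` coordinates, which
equals `1` at `e_d + λp`, certifies `‖p‖_P ≥ 1/λ`. So the diameter of `V` is `1` while the
pair `0, p` is at distance `1/λ`.
-/

open Pointwise

open Set

section Gauge

variable {E : Type*} [AddCommGroup E] [Module ℝ E]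

theorem Seminorm.le_mul_gauge_of_forall_le (q : Seminorm ℝ E) {s : Set E} {c t : ℝ} {z : E}
    (hq : ∀ w ∈ s, q w ≤ c) (hc : 0 < c) (ht : 0 < t) (hz : z ∈ t • s) :
    q z ≤ c * gauge s z := by
  rw [← div_le_iff₀' hc, gauge_def]
  refine le_csInf ⟨t, ht, hz⟩ ?_
  rintro r ⟨hr, w, hw, rfl⟩
  rw [map_smul_eq_mul, Real.norm_of_nonneg hr.out.le, div_le_iff₀' hc, mul_comm c]
  exact mul_le_mul_of_nonneg_left (hq w hw) hr.out.le

theorem gauge_pos_of_isBounded {F : Type*} [NormedAddCommGroup F] [NormedSpace ℝ F]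
    {s : Set F} (hs : Bornology.IsBounded s) {z : F} (hz : z ∈ s) (hz₀ : z ≠ 0) :
    0 < gauge s z := by
  obtain ⟨R, hR, hsR⟩ := hs.subset_closedBall_lt 0 0
  have hnorm : ‖z‖ ≤ R * gauge s z :=
    (normSeminorm ℝ F).le_mul_gauge_of_forall_le (fun w hw => mem_closedBall_zero_iff.mp (hsR hw))
      hR one_pos (by rwa [one_smul])
  exact pos_of_mul_pos_right (hnorm.trans_lt' (norm_pos_iff.mpr hz₀)) hR.le

end Gauge

section RelNorm

variable {E : Type*} [AddCommGroup E] [Module ℝ E]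

theorem relNorm_sub_le_one {P : Set E} {x y : E} (hx : x ∈ P) (hy : y ∈ P) :
    relNorm P (x - y) ≤ 1 :=
  gauge_le_one_of_mem (sub_mem_sub hx hy)

theorem abs_map_le_one_of_mapsTo_Icc {V : Set E} {f : E →ₗ[ℝ] ℝ}
    (hf : MapsTo f V (Icc 0 1)) {w : E} (hw : w ∈ convexHull ℝ V - convexHull ℝ V) :
    |f w| ≤ 1 := by
  have hP : MapsTo f (convexHull ℝ V) (Icc 0 1) :=
    convexHull_min hf ((convex_Icc 0 1).linear_preimage f)
  obtain ⟨x, hx, y, hy, rfl⟩ := hw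
  obtain ⟨hx₀, hx₁⟩ := hP hx
  obtain ⟨hy₀, hy₁⟩ := hP hy
  rw [map_sub, abs_le]
  constructor <;> linarith

theorem relNorm_convexHull_eq {V : Set E} {f : E →ₗ[ℝ] ℝ} (hf : MapsTo f V (Icc 0 1))
    {t : ℝ} {z : E} (ht : 0 < t) (hz : z ∈ t • (convexHull ℝ V - convexHull ℝ V))
    (hfz : f z = t) : relNorm (convexHull ℝ V) z = t := by
  refine le_antisymm (gauge_le_of_mem ht.le hz) ?_
  have := ((normSeminorm ℝ ℝ).comp f).le_mul_gauge_of_forall_le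
    (fun w hw => abs_map_le_one_of_mapsTo_Icc hf hw) one_pos ht hz
  simpa [relNorm, hfz, abs_of_pos ht] using this

theorem relNorm_sub_pos {F : Type*} [NormedAddCommGroup F] [NormedSpace ℝ F] {P : Set F}
    (hP : Bornology.IsBounded P) {x y : F} (hx : x ∈ P) (hy : y ∈ P) (hxy : x ≠ y) :
    0 < relNorm P (x - y) :=
  gauge_pos_of_isBounded (hP.sub hP) (sub_mem_sub hx hy) (sub_ne_zero.mpr hxy)

end RelNorm

section RatioOfDistances

variable {E : Type*} [AddCommGroup E] (N : E → ℝ)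

theorem polyDiam_eq {P : Set E} {D : ℝ} (hle : ∀ x ∈ P, ∀ y ∈ P, N (x - y) ≤ D)
    {x₀ y₀ : E} (hx₀ : x₀ ∈ P) (hy₀ : y₀ ∈ P) (hD : N (x₀ - y₀) = D) : polyDiam N P = D :=
  IsGreatest.csSup_eq ⟨⟨x₀, hx₀, y₀, hy₀, hD⟩, by rintro _ ⟨x, hx, y, hy, rfl⟩; exact hle x hx y hy⟩

theorem finite_setOf_pairDist (V : Finset E) :
    {r | ∃ x ∈ V, ∃ y ∈ V, x ≠ y ∧ N (x - y) = r}.Finite :=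
  ((V ×ˢ V).finite_toSet.image fun q => N (q.1 - q.2)).subset
    (by rintro _ ⟨x, hx, y, hy, -, rfl⟩; exact ⟨(x, y), Finset.mem_product.mpr ⟨hx, hy⟩, rfl⟩)

theorem minPairDist_le {V : Finset E} {x y : E} (hx : x ∈ V) (hy : y ∈ V) (hxy : x ≠ y) :
    minPairDist N V ≤ N (x - y) :=
  csInf_le (finite_setOf_pairDist N V).bddBelow ⟨x, hx, y, hy, hxy, rfl⟩

theorem minPairDist_pos {V : Finset E} (hpos : ∀ x ∈ V, ∀ y ∈ V, x ≠ y → 0 < N (x - y))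
    {x₀ y₀ : E} (hx₀ : x₀ ∈ V) (hy₀ : y₀ ∈ V) (hxy₀ : x₀ ≠ y₀) : 0 < minPairDist N V := by
  obtain ⟨x, hx, y, hy, hxy, hmin⟩ :=
    Set.Nonempty.csInf_mem (s := {r | ∃ x ∈ V, ∃ y ∈ V, x ≠ y ∧ N (x - y) = r})
      ⟨N (x₀ - y₀), x₀, hx₀, y₀, hy₀, hxy₀, rfl⟩ (finite_setOf_pairDist N V)
  rw [minPairDist, ← hmin]
  exact hpos x hx y hy hxy

theorem div_le_lamV {V : Finset E} (hpos : ∀ x ∈ V, ∀ y ∈ V, x ≠ y → 0 < N (x - y))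
    (hdiam : 0 ≤ polyDiam N V) {x y : E} (hx : x ∈ V) (hy : y ∈ V) (hxy : x ≠ y) :
    polyDiam N V / N (x - y) ≤ lamV N V :=
  div_le_div_of_nonneg_left hdiam (minPairDist_pos N hpos hx hy hxy) (minPairDist_le N hx hy hxy)

end RatioOfDistances

section TalataExample

variable {ι : Type*} [Fintype ι] [DecidableEq ι] (j : ι)

noncomputable def talataPoint : ι → ℝ :=
  (2 / ((Fintype.card ι : ℝ) - 1)) • ∑ i ∈ Finset.univ.erase j, Pi.single i 1

def talataVertices (l : ℝ) : Set (ι → ℝ) :=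
  {0} ∪ range (fun i => Pi.single i 1) ∪ {talataPoint j, Pi.single j 1 + l • talataPoint j}

def sumExcept : (ι → ℝ) →ₗ[ℝ] ℝ :=
  ∑ k ∈ Finset.univ.erase j, LinearMap.proj k

theorem sumExcept_apply (x : ι → ℝ) : sumExcept j x = ∑ k ∈ Finset.univ.erase j, x k := by
  simp [sumExcept]

theorem talataPoint_apply_self : talataPoint j j = 0 := by
  simp [talataPoint]

theorem sumExcept_single (i : ι) : sumExcept j (Pi.single i 1) = if i = j then 0 else 1 := by
  simp [sumExcept_apply, Pi.single_apply, eq_comm]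

theorem sumExcept_talataPoint (hι : 1 < Fintype.card ι) : sumExcept j (talataPoint j) = 2 := by
  have hcard : (Fintype.card ι : ℝ) - 1 ≠ 0 := sub_ne_zero.mpr (by exact_mod_cast hι.ne')
  rw [talataPoint, map_smul, map_sum, Finset.sum_congr rfl fun i hi => by
      rw [sumExcept_single, if_neg (Finset.ne_of_mem_erase hi)],
    Finset.sum_const, Finset.card_erase_of_mem (Finset.mem_univ _), Finset.card_univ, nsmul_one,
    Nat.cast_sub hι.le, smul_eq_mul, Nat.cast_one, div_mul_cancel₀ _ hcard]

theorem mapsTo_talataVertices {l : ℝ} {f : (ι → ℝ) →ₗ[ℝ] ℝ}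
    (he : ∀ i, f (Pi.single i 1) ∈ Icc 0 1) (hp : f (talataPoint j) ∈ Icc 0 1)
    (hq : f (Pi.single j 1 + l • talataPoint j) ∈ Icc 0 1) :
    MapsTo f (talataVertices j l) (Icc 0 1) := by
  rintro v ((rfl | ⟨i, rfl⟩) | rfl | rfl)
  exacts [by simp, he i, hp, hq]

theorem proj_mapsTo_talataVertices (l : ℝ) :
    MapsTo (LinearMap.proj (R := ℝ) j) (talataVertices j l) (Icc 0 1) := by
  refine mapsTo_talataVertices j (fun i => ?_) ?_ ?_ <;>
    simp [talataPoint_apply_self, Pi.single_apply]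
  split_ifs <;> norm_num

theorem smul_sumExcept_talataPoint (hι : 1 < Fintype.card ι) {l : ℝ} (hl : l ≠ 0) :
    ((2 * l)⁻¹ • sumExcept j) (talataPoint j) = l⁻¹ := by
  rw [LinearMap.smul_apply, sumExcept_talataPoint j hι, smul_eq_mul]
  field_simp

theorem sumExcept_mapsTo_talataVertices (hι : 1 < Fintype.card ι) {l : ℝ} (hl : 1 ≤ l) :
    MapsTo ((2 * l)⁻¹ • sumExcept j) (talataVertices j l) (Icc 0 1) := by
  have hl₀ : 0 < l := by linarith
  refine mapsTo_talataVertices j (fun i => ?_) ?_ ?_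
  · rw [LinearMap.smul_apply, sumExcept_single, smul_eq_mul]
    split_ifs
    · simp
    · exact ⟨by positivity, by rw [mul_one]; exact inv_le_one_of_one_le₀ (by linarith)⟩
  · rw [smul_sumExcept_talataPoint j hι hl₀.ne']
    exact ⟨by positivity, inv_le_one_of_one_le₀ hl⟩
  · rw [map_add, map_smul, smul_sumExcept_talataPoint j hι hl₀.ne', LinearMap.smul_apply,
      sumExcept_single, if_pos rfl, smul_eq_mul, smul_eq_mul, mul_zero, zero_add,
      mul_inv_cancel₀ hl₀.ne']
    exact ⟨zero_le_one, le_rfl⟩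

theorem relNorm_talataVertices_single (l : ℝ) :
    relNorm (convexHull ℝ (talataVertices j l)) (Pi.single j 1) = 1 := by
  refine relNorm_convexHull_eq (proj_mapsTo_talataVertices j l) one_pos ?_ (by simp)
  rw [one_smul, ← sub_zero (Pi.single j 1)]
  exact sub_mem_sub (subset_convexHull ℝ _ (by simp [talataVertices]))
    (subset_convexHull ℝ _ (by simp [talataVertices]))

theorem relNorm_talataVertices_talataPoint (hι : 1 < Fintype.card ι) {l : ℝ} (hl : 1 < l) :
    relNorm (convexHull ℝ (talataVertices j l)) (talataPoint j) = l⁻¹ := by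
  have hl₀ : 0 < l := by linarith
  refine relNorm_convexHull_eq (sumExcept_mapsTo_talataVertices j hι hl.le) (inv_pos.mpr hl₀) ?_
    (smul_sumExcept_talataPoint j hι hl₀.ne')
  rw [Set.mem_smul_set_iff_inv_smul_mem₀ (inv_ne_zero hl₀.ne'), inv_inv,
    ← add_sub_cancel_left (Pi.single j 1) (l • talataPoint j)]
  exact sub_mem_sub (subset_convexHull ℝ _ (by simp [talataVertices]))
    (subset_convexHull ℝ _ (by simp [talataVertices]))

end TalataExample

/-- Talata's example. For `d ≥ 4`, `p = (2/(d−1)) Σ_{i=1}^{d−1} e_i` and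
`1 < l < (d−1)/2`, the polytope `P` with vertex set `V = {0, e_1, …, e_d, p, e_d + l·p}`
satisfies: the diameter of `V` in the relative norm `‖·‖_P` is at most `1`,
`‖e_d − 0‖_P = 1`, `‖p − 0‖_P = 1/l`, and consequently `λ(V; ‖·‖_P) ≥ l`. -/
theorem talata_relNorm_example (d : ℕ) (hd : 4 ≤ d)
    (e : Fin d → (Fin d → ℝ)) (he : ∀ i, e i = Pi.single i 1)
    (p : Fin d → ℝ)
    (hp : p = (2 / ((d : ℝ) - 1)) • ∑ i ∈ Finset.univ.erase (⟨d - 1, by omega⟩ : Fin d), e i)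
    (l : ℝ) (hl1 : 1 < l)
    (V : Finset (Fin d → ℝ))
    (hV : (V : Set (Fin d → ℝ)) =
      {0} ∪ Set.range e ∪ {p, e ⟨d - 1, by omega⟩ + l • p})
    (P : Set (Fin d → ℝ)) (hP : P = convexHull ℝ (V : Set (Fin d → ℝ))) :
    (∀ x ∈ V, ∀ y ∈ V, relNorm P (x - y) ≤ 1) ∧
      relNorm P (e ⟨d - 1, by omega⟩ - 0) = 1 ∧
      relNorm P (p - 0) = 1 / l ∧
      l ≤ lamV (relNorm P) V := by
  set j : Fin d := ⟨d - 1, by omega⟩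
  obtain rfl : e = fun i => Pi.single i 1 := funext he
  obtain rfl : p = talataPoint j := by rw [hp, talataPoint, Fintype.card_fin]
  replace hV : (V : Set (Fin d → ℝ)) = talataVertices j l := hV
  rw [hV] at hP
  have hcard : 1 < Fintype.card (Fin d) := by rw [Fintype.card_fin]; omega
  have hVP {v} (hv : v ∈ V) : v ∈ P := hP ▸ subset_convexHull ℝ _ (hV ▸ Finset.mem_coe.mpr hv)
  obtain ⟨h0V, hjV, hpV⟩ : (0 : Fin d → ℝ) ∈ V ∧ Pi.single j 1 ∈ V ∧ talataPoint j ∈ V := by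
    simp [← Finset.mem_coe, hV, talataVertices]
  have hdiam : ∀ x ∈ V, ∀ y ∈ V, relNorm P (x - y) ≤ 1 :=
    fun x hx y hy => relNorm_sub_le_one (hVP hx) (hVP hy)
  have hej : relNorm P (Pi.single j 1 - 0) = 1 := by
    rw [sub_zero, hP, relNorm_talataVertices_single]
  have hpnorm : relNorm P (talataPoint j - 0) = 1 / l := by
    rw [sub_zero, hP, relNorm_talataVertices_talataPoint j hcard hl1, one_div]
  refine ⟨hdiam, hej, hpnorm, ?_⟩
  have hpolyDiam : polyDiam (relNorm P) V = 1 := polyDiam_eq _ hdiam hjV h0V hej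
  have hpos : ∀ x ∈ V, ∀ y ∈ V, x ≠ y → 0 < relNorm P (x - y) := fun x hx y hy hxy =>
    relNorm_sub_pos (hP ▸ isBounded_convexHull.mpr (hV ▸ V.finite_toSet.isBounded)) (hVP hx)
      (hVP hy) hxy
  have hp₀ : talataPoint j ≠ 0 := fun h => by
    simp [h, relNorm, (zero_lt_one.trans hl1).ne] at hpnorm
  calc l = polyDiam (relNorm P) V / relNorm P (talataPoint j - 0) := by
        rw [hpolyDiam, hpnorm, one_div_one_div]
    _ ≤ lamV (relNorm P) V := div_le_lamV _ hpos (hpolyDiam ▸ zero_le_one) hpV h0V hp₀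
end
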